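/- For 0 ≤ m ≤ n define w^{ang}_{m,n}(0) := ((−1)^m/π) √(m!/n!) ∫₀^∞ (√2 r)^{n−m} e^{−r²} L_m^{(n−m)}(2r²) r dr. Let c ∈ (0,1) and let (m_j), (n_j) be sequences of natural numbers with m_j ≤ n_j, m_j → ∞, n_j → ∞ and m_j/n_j → c. If all m_j are even, then w^{ang}_{m_j,n_j}(0) → (2π)^{−1} c^{−1/4}; if all m_j are odd, then w^{ang}_{m_j,n_j}(0) → (2π)^{−1} c^{1/4}. -/

import Mathlib

open MeasureTheory Real

noncomputable section

/-- The associated Laguerre polynomial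
`L_m^{(k)}(x) = Σ_{j=0}^{m} (−1)^j C(m+k, m−j) x^j / j!`. -/
def laguerreL (m k : ℕ) (x : ℝ) : ℝ :=
  ∑ j ∈ Finset.range (m + 1),
    (-1 : ℝ) ^ j * (Nat.choose (m + k) (m - j) : ℝ) * x ^ j / (Nat.factorial j : ℝ)

/-- The value `w^{ang}_{m,n}(0)` of the angular Wigner function of the number-state
matrix element at angle 0 (for `m ≤ n`):
`((−1)^m/π) √(m!/n!) ∫₀^∞ (√2 r)^{n−m} e^{−r²} L_m^{(n−m)}(2r²) r dr`. -/
def wang (m n : ℕ) : ℝ :=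
  ((-1 : ℝ) ^ m / π) * Real.sqrt ((Nat.factorial m : ℝ) / (Nat.factorial n : ℝ)) *
    ∫ r in Set.Ioi (0 : ℝ),
      (Real.sqrt 2 * r) ^ (n - m) * Real.exp (-r ^ 2) * laguerreL m (n - m) (2 * r ^ 2) * r

open Filter Topology Set Finset


/-- `Pq k q = ∏_{i=1}^q (k/2 + i) / q!` -/
def Pq (k q : ℕ) : ℝ :=
  (∏ i ∈ Finset.range q, ((k : ℝ) / 2 + (i + 1))) / (Nat.factorial q : ℝ)

/-- `Bb k j = 2^j ∏_{i=1}^j (k/2+i) / j!` -/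
def Bb (k j : ℕ) : ℝ := 2 ^ j * Pq k j

lemma Pq_pos (k q : ℕ) : 0 < Pq k q := by
  apply div_pos
  · apply Finset.prod_pos; intro i _; positivity
  · positivity

lemma Bb_pos (k j : ℕ) : 0 < Bb k j := by
  have := Pq_pos k j
  unfold Bb; positivity

lemma Pq_succ (k q : ℕ) : Pq k (q + 1) = Pq k q * ((k : ℝ) / 2 + (q + 1)) / (q + 1) := by
  unfold Pq
  rw [Finset.prod_range_succ, Nat.factorial_succ]
  push_cast
  field_simp

lemma Bb_succ (k j : ℕ) :
    ((j : ℝ) + 1) * Bb k (j + 1) = ((k : ℝ) + 2 * (j + 1)) * Bb k j := by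
  unfold Bb
  rw [Pq_succ]
  have hj : ((j : ℝ) + 1) ≠ 0 := by positivity
  field_simp
  ring

/-- The key sum. -/
def Sc (m k : ℕ) : ℝ :=
  ∑ j ∈ Finset.range (m + 1), (-1 : ℝ) ^ j * (Nat.choose (m + k) (m - j) : ℝ) * Bb k j



def ch (k a j : ℕ) : ℝ := if j ≤ a then (Nat.choose (a + k) (a - j) : ℝ) else 0

def tt (k a j : ℕ) : ℝ := (-1 : ℝ) ^ j * ch k a j * Bb k j

def Dd (m k j : ℕ) : ℝ :=
  (2 * (m : ℝ) + k + 4) * ch k (m + 1) j - 2 * ((m : ℝ) + k + 1) * ch k m j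

def Ff (m k : ℕ) : ℕ → ℝ
  | 0 => 0
  | (j + 1) => (-1 : ℝ) ^ j * Dd m k j * Bb k j

lemma Sc_eq_sum (k a N : ℕ) (ha : a + 1 ≤ N) : Sc a k = ∑ j ∈ Finset.range N, tt k a j := by
  have h1 : Sc a k = ∑ j ∈ Finset.range (a + 1), tt k a j := by
    unfold Sc tt ch
    apply Finset.sum_congr rfl
    intro j hj
    rw [Finset.mem_range] at hj
    rw [if_pos (by omega)]
  rw [h1]
  apply Finset.sum_subset
  · intro x hx
    rw [Finset.mem_range] at *; omega
  · intro x _ hx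
    rw [Finset.mem_range, not_lt] at hx
    unfold tt ch
    rw [if_neg (by omega)]
    ring

lemma choose_abs (n r : ℕ) :
    ((n : ℝ) + 1) * (Nat.choose n r : ℝ) = ((Nat.choose (n + 1) (r + 1)) : ℝ) * (r + 1) := by
  have := Nat.add_one_mul_choose_eq n r
  exact_mod_cast congrArg (Nat.cast (R := ℝ)) this

lemma pointwise (m k : ℕ) : ∀ j, j < m + 3 →
    ((m : ℝ) + 2) * tt k (m + 2) j + tt k (m + 1) j - ((k : ℝ) + m + 1) * tt k m j
      = Ff m k (j + 1) - Ff m k j := by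
  intro j hj
  have hB0 : Bb k 0 = 1 := by simp [Bb, Pq]
  rcases Nat.eq_zero_or_pos j with rfl | hj1
  · -- j = 0
    simp only [tt, ch, Ff, Dd, pow_zero, one_mul, if_pos (Nat.zero_le _)]
    rw [hB0]
    simp only [Nat.sub_zero, mul_one]
    have h1 : ((m : ℝ) + k + 2) * (Nat.choose (m + 1 + k) (m + 1) : ℝ)
        = ((Nat.choose (m + 2 + k) (m + 2)) : ℝ) * (m + 2) := by
      have h := choose_abs (m + 1 + k) (m + 1)
      have e2 : m + 1 + k + 1 = m + 2 + k := by omega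
      rw [e2] at h
      push_cast at h ⊢
      linarith [h]
    have h2 : ((m : ℝ) + k + 1) * (Nat.choose (m + k) m : ℝ)
        = ((Nat.choose (m + 1 + k) (m + 1)) : ℝ) * (m + 1) := by
      have h := choose_abs (m + k) m
      have e2 : m + k + 1 = m + 1 + k := by omega
      rw [e2] at h
      push_cast at h ⊢
      linarith [h]
    linear_combination (-1 : ℝ) * h1 + h2
  · rcases Nat.lt_or_ge j (m + 1) with hjm | hjm
    · -- 1 ≤ j ≤ m
      obtain ⟨i, rfl⟩ : ∃ i, j = i + 1 := ⟨j - 1, by omega⟩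
      have him : i + 1 ≤ m := by omega
      simp only [tt, ch, Ff, Dd,
        if_pos (show i + 1 ≤ m + 2 by omega), if_pos (show i + 1 ≤ m + 1 by omega),
        if_pos (show i + 1 ≤ m by omega), if_pos (show i ≤ m + 1 by omega),
        if_pos (show i ≤ m by omega)]
      -- canonicalize subtraction indices
      have e1 : m + 2 - (i + 1) = m + 1 - i := by omega
      have e2 : m + 1 - (i + 1) = m - i := by omega
      have e3 : m - (i + 1) = m - i - 1 := by omega
      have e4 : m + 1 - i = (m - i) + 1 := by omega
      have e5 : m - i = (m - i - 1) + 1 := by omega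
      rw [e1, e2, e3]
      -- relations
      have hR1 : ((Nat.choose (m + 2 + k) (m + 1 - i)) : ℝ)
          = (Nat.choose (m + 1 + k) (m - i) : ℝ) + (Nat.choose (m + 1 + k) (m + 1 - i) : ℝ) := by
        have eu : m + 2 + k = (m + 1 + k) + 1 := by omega
        rw [e4, eu, Nat.choose_succ_succ']
        push_cast
        ring
      have hR2 : ((Nat.choose (m + 1 + k) (m - i)) : ℝ)
          = (Nat.choose (m + k) (m - i - 1) : ℝ) + (Nat.choose (m + k) (m - i) : ℝ) := by
        have eu : m + 1 + k = (m + k) + 1 := by omega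
        rw [e5, eu, Nat.choose_succ_succ']
        push_cast
        ring
      have hR3 : ((m : ℝ) + 1 - i) * (Nat.choose (m + 2 + k) (m + 1 - i) : ℝ)
          = ((m : ℝ) + k + 2) * (Nat.choose (m + 1 + k) (m - i) : ℝ) := by
        have h := choose_abs (m + 1 + k) (m - i)
        have eu : m + 1 + k + 1 = m + 2 + k := by omega
        rw [eu, ← e4] at h
        have ec : ((m - i : ℕ) : ℝ) = (m : ℝ) - i := by
          push_cast [Nat.cast_sub (show i ≤ m by omega)]; ring
        rw [ec] at h
        push_cast at h ⊢
        linarith [h]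
      have hR4 : ((m : ℝ) - i) * (Nat.choose (m + 1 + k) (m - i) : ℝ)
          = ((m : ℝ) + k + 1) * (Nat.choose (m + k) (m - i - 1) : ℝ) := by
        have h := choose_abs (m + k) (m - i - 1)
        have eu : m + k + 1 = m + 1 + k := by omega
        rw [eu, ← e5] at h
        have ec : ((m - i - 1 : ℕ) : ℝ) = (m : ℝ) - i - 1 := by
          rw [show m - i - 1 = m - (i + 1) from by omega,
            Nat.cast_sub (show i + 1 ≤ m from by omega)]
          push_cast; ring
        rw [ec] at h
        push_cast at h ⊢
        linarith [h]
      have hBrec := Bb_succ k i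
      have hkJ : ((k : ℝ) + 2 * ((i : ℝ) + 1)) ≠ 0 := by positivity
      apply mul_left_cancel₀ hkJ
      rw [pow_succ]
      linear_combination
        (-((-1:ℝ)^i) * Bb k (i+1) * ((i:ℝ)+1) * (2*(m:ℝ)+(k:ℝ)+4)) * hR1
        + (2 * ((-1:ℝ)^i) * Bb k (i+1) * ((i:ℝ)+1) * ((m:ℝ)+(k:ℝ)+1)) * hR2
        + (-((-1:ℝ)^i) * Bb k (i+1) * (k:ℝ)) * hR3
        + (((-1:ℝ)^i) * Bb k (i+1) * (k:ℝ)) * hR4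
        + (-((-1:ℝ)^i) * ((2*(m:ℝ)+(k:ℝ)+4) * (Nat.choose (m + 1 + k) (m + 1 - i) : ℝ)
            - 2*((m:ℝ)+(k:ℝ)+1) * (Nat.choose (m + k) (m - i) : ℝ))) * hBrec
    · rcases Nat.eq_or_lt_of_le hjm with hje | hjl
      · -- j = m + 1
        have hje' : j = m + 1 := hje.symm
        subst hje'
        simp only [tt, ch, Ff, Dd,
          if_pos (show m + 1 ≤ m + 2 by omega), if_pos (show m + 1 ≤ m + 1 by omega),
          if_neg (show ¬ (m + 1 ≤ m) by omega),
          if_pos (show m ≤ m + 1 by omega), if_pos (show m ≤ m by omega)]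
        have e1 : m + 2 - (m + 1) = 1 := by omega
        have e2 : m + 1 - (m + 1) = 0 := by omega
        have e3 : m + 1 - m = 1 := by omega
        have e4 : m - m = 0 := by omega
        rw [e1, e2, e3, e4, Nat.choose_one_right, Nat.choose_zero_right,
          Nat.choose_one_right, Nat.choose_zero_right]
        have hBrec := Bb_succ k m
        have hkJ : ((k : ℝ) + 2 * ((m : ℝ) + 1)) ≠ 0 := by positivity
        apply mul_left_cancel₀ hkJ
        rw [pow_succ]
        push_cast
        linear_combination (-((-1:ℝ)^m) * ((m:ℝ)+(k:ℝ)+1) * (2*(m:ℝ)+(k:ℝ)+2)) * hBrec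
      · -- j = m + 2
        have hje' : j = m + 2 := by omega
        subst hje'
        simp only [tt, ch, Ff, Dd,
          if_pos (show m + 2 ≤ m + 2 by omega),
          if_neg (show ¬ (m + 2 ≤ m + 1) by omega), if_neg (show ¬ (m + 2 ≤ m) by omega),
          if_pos (show m + 1 ≤ m + 1 by omega), if_neg (show ¬ (m + 1 ≤ m) by omega)]
        have e1 : m + 2 - (m + 2) = 0 := by omega
        have e2 : m + 1 - (m + 1) = 0 := by omega
        rw [e1, e2, Nat.choose_zero_right, Nat.choose_zero_right]
        have hBrec := Bb_succ k (m + 1)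
        rw [show m + 1 + 1 = m + 2 from rfl] at hBrec
        rw [show ((-1:ℝ))^(m+2) = (-1:ℝ)^m by rw [pow_add]; ring,
            show ((-1:ℝ))^(m+1) = -(-1:ℝ)^m by rw [pow_succ]; ring]
        push_cast at hBrec ⊢
        linear_combination ((-1:ℝ)^m) * hBrec

lemma Sc_rec (m k : ℕ) :
    ((m : ℝ) + 2) * Sc (m + 2) k = -Sc (m + 1) k + ((k : ℝ) + m + 1) * Sc m k := by
  have h2 : Sc (m + 2) k = ∑ j ∈ Finset.range (m + 3), tt k (m + 2) j :=
    Sc_eq_sum k (m + 2) (m + 3) (by omega)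
  have h1 : Sc (m + 1) k = ∑ j ∈ Finset.range (m + 3), tt k (m + 1) j :=
    Sc_eq_sum k (m + 1) (m + 3) (by omega)
  have h0 : Sc m k = ∑ j ∈ Finset.range (m + 3), tt k m j :=
    Sc_eq_sum k m (m + 3) (by omega)
  have key : ∑ j ∈ Finset.range (m + 3),
      (((m : ℝ) + 2) * tt k (m + 2) j + tt k (m + 1) j - ((k : ℝ) + m + 1) * tt k m j)
      = Ff m k (m + 3) - Ff m k 0 := by
    rw [← Finset.sum_range_sub (Ff m k) (m + 3)]
    apply Finset.sum_congr rfl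
    intro j hj
    exact pointwise m k j (Finset.mem_range.mp hj)
  have hF0 : Ff m k 0 = 0 := rfl
  have hFend : Ff m k (m + 3) = 0 := by
    show (-1 : ℝ) ^ (m + 2) * Dd m k (m + 2) * Bb k (m + 2) = 0
    unfold Dd ch
    rw [if_neg (by omega), if_neg (by omega)]
    ring
  rw [hF0, hFend] at key
  simp only [Finset.sum_sub_distrib, Finset.sum_add_distrib, ← Finset.mul_sum] at key
  rw [h2, h1, h0]
  linarith [key]

theorem Sc_eq (m k : ℕ) : Sc m k = (-1 : ℝ) ^ m * Pq k (m / 2) := by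
  induction m using Nat.strong_induction_on with
  | _ m ih =>
    match m with
    | 0 => simp [Sc, Bb, Pq]
    | 1 =>
        rw [show (1 : ℕ) / 2 = 0 from rfl]
        unfold Sc
        rw [Finset.sum_range_succ, Finset.sum_range_one]
        unfold Bb
        rw [Pq_succ]
        simp [Pq, Nat.choose_one_right]
        push_cast
        ring
    | (m + 2) =>
        have hrec := Sc_rec m k
        have ih1 := ih (m + 1) (by omega)
        have ih0 := ih m (by omega)
        have hm2 : ((m : ℝ) + 2) ≠ 0 := by positivity
        apply mul_left_cancel₀ hm2
        rw [hrec, ih1, ih0]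
        rcases Nat.even_or_odd m with ⟨q, hq⟩ | ⟨q, hq⟩
        · -- m = 2q
          subst hq
          have d1 : (q + q) / 2 = q := by omega
          have d2 : (q + q + 1) / 2 = q := by omega
          have d3 : (q + q + 2) / 2 = q + 1 := by omega
          rw [d1, d2, d3, Pq_succ]
          rw [show ((-1:ℝ))^(q+q) = 1 from Even.neg_one_pow ⟨q, rfl⟩,
              show ((-1:ℝ))^(q+q+1) = -1 from Odd.neg_one_pow ⟨q, by ring⟩,
              show ((-1:ℝ))^(q+q+2) = 1 from Even.neg_one_pow ⟨q+1, by ring⟩]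
          have hq1 : ((q : ℝ) + 1) ≠ 0 := by positivity
          field_simp
          push_cast
          ring
        · -- m = 2q + 1
          subst hq
          have d1 : (2 * q + 1) / 2 = q := by omega
          have d2 : (2 * q + 1 + 1) / 2 = q + 1 := by omega
          have d3 : (2 * q + 1 + 2) / 2 = q + 1 := by omega
          rw [d1, d2, d3, Pq_succ]
          rw [show ((-1:ℝ))^(2*q+1) = -1 from Odd.neg_one_pow ⟨q, by ring⟩,
              show ((-1:ℝ))^(2*q+1+1) = 1 from Even.neg_one_pow ⟨q+1, by ring⟩,
              show ((-1:ℝ))^(2*q+1+2) = -1 from Odd.neg_one_pow ⟨q+1, by ring⟩]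
          have hq1 : ((q : ℝ) + 1) ≠ 0 := by positivity
          field_simp
          push_cast
          ring


lemma integral_pow_exp_neg_sq (s : ℝ) (hs : -1 < s) :
    ∫ r in Ioi (0 : ℝ), r ^ s * Real.exp (-r ^ 2) = Real.Gamma ((s + 1) / 2) / 2 := by
  have hp : (0 : ℝ) < 2 := two_pos
  have key := MeasureTheory.integral_comp_rpow_Ioi_of_pos
    (g := fun y : ℝ => Real.exp (-y) * y ^ ((s - 1) / 2)) hp
  have h1 : (∫ x in Ioi (0:ℝ), (2 * x ^ ((2:ℝ) - 1)) • (Real.exp (-(x ^ (2:ℝ))) * (x ^ (2:ℝ)) ^ ((s - 1) / 2)))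
      = ∫ x in Ioi (0:ℝ), 2 * (x ^ s * Real.exp (-x ^ 2)) := by
    apply setIntegral_congr_fun measurableSet_Ioi
    intro x hx
    have hx0 : (0 : ℝ) < x := hx
    have h2 : x ^ (2:ℝ) = x ^ (2:ℕ) := by
      rw [show (2:ℝ) = ((2:ℕ):ℝ) by norm_num, Real.rpow_natCast]
    have h3 : ((x ^ (2:ℕ)) : ℝ) ^ ((s - 1) / 2) = x ^ (s - 1) := by
      rw [← Real.rpow_natCast x 2, ← Real.rpow_mul hx0.le]
      push_cast
      ring_nf
    have h4 : x ^ ((2:ℝ) - 1) = x := by norm_num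
    have h5 : x ^ (s - 1) = x ^ s / x := by
      rw [Real.rpow_sub hx0, Real.rpow_one]
    simp only [smul_eq_mul, h2, h3, h4, h5]
    field_simp
  rw [h1] at key
  have h6 : ∫ y in Ioi (0:ℝ), Real.exp (-y) * y ^ ((s - 1) / 2) = Real.Gamma ((s + 1) / 2) := by
    rw [Real.Gamma_eq_integral (by linarith : 0 < (s + 1) / 2)]
    apply setIntegral_congr_fun measurableSet_Ioi
    intro y _
    congr 1
    ring
  rw [h6, integral_const_mul] at key
  linarith [key]

lemma integrableOn_pow_exp_neg_sq (a : ℕ) :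
    IntegrableOn (fun r : ℝ => r ^ a * Real.exp (-r ^ 2)) (Ioi (0:ℝ)) := by
  have ha : (-1:ℝ) < (a : ℝ) := by
    have : (0:ℝ) ≤ (a:ℝ) := Nat.cast_nonneg a
    linarith
  have h := integrableOn_rpow_mul_exp_neg_mul_sq (b := 1) one_pos (s := (a : ℝ)) ha
  apply h.congr_fun _ measurableSet_Ioi
  intro x _
  simp only [Real.rpow_natCast, neg_mul, one_mul]

lemma integral_pow_nat_exp_neg_sq (a : ℕ) :
    ∫ r in Ioi (0 : ℝ), r ^ a * Real.exp (-r ^ 2) = Real.Gamma (((a : ℝ) + 1) / 2) / 2 := by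
  have ha : (-1:ℝ) < (a : ℝ) := by
    have : (0:ℝ) ≤ (a:ℝ) := Nat.cast_nonneg a
    linarith
  rw [← integral_pow_exp_neg_sq (a : ℝ) ha]
  apply setIntegral_congr_fun measurableSet_Ioi
  intro x _
  simp only [Real.rpow_natCast]


lemma Gamma_half_add_nat (k j : ℕ) :
    Real.Gamma ((k : ℝ) / 2 + j + 1)
      = Real.Gamma ((k : ℝ) / 2 + 1) * ∏ i ∈ Finset.range j, ((k : ℝ) / 2 + (i + 1)) := by
  induction j with
  | zero => simp
  | succ j ihj =>
      have hne : (k : ℝ) / 2 + j + 1 ≠ 0 := by positivity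
      have : (k : ℝ) / 2 + (j + 1 : ℕ) + 1 = ((k : ℝ) / 2 + j + 1) + 1 := by push_cast; ring
      rw [this, Real.Gamma_add_one hne, ihj, Finset.prod_range_succ]
      push_cast
      ring

lemma laguerre_integral (m k : ℕ) :
    (∫ r in Ioi (0 : ℝ),
        (Real.sqrt 2 * r) ^ k * Real.exp (-r ^ 2) * laguerreL m k (2 * r ^ 2) * r)
      = (Real.sqrt 2) ^ k * Real.Gamma ((k : ℝ) / 2 + 1) / 2 * Sc m k := by
  have hint : ∀ j : ℕ, IntegrableOn
      (fun r : ℝ => ((Real.sqrt 2) ^ k * ((-1 : ℝ) ^ j * (Nat.choose (m + k) (m - j) : ℝ)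
          * 2 ^ j / (Nat.factorial j : ℝ))) * (r ^ (k + 2 * j + 1) * Real.exp (-r ^ 2)))
      (Ioi (0:ℝ)) := fun j => (integrableOn_pow_exp_neg_sq (k + 2 * j + 1)).const_mul _
  have hfun : ∀ r ∈ Ioi (0:ℝ),
      (Real.sqrt 2 * r) ^ k * Real.exp (-r ^ 2) * laguerreL m k (2 * r ^ 2) * r
        = ∑ j ∈ Finset.range (m + 1),
          ((Real.sqrt 2) ^ k * ((-1 : ℝ) ^ j * (Nat.choose (m + k) (m - j) : ℝ)
            * 2 ^ j / (Nat.factorial j : ℝ))) * (r ^ (k + 2 * j + 1) * Real.exp (-r ^ 2)) := by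
    intro r _
    unfold laguerreL
    rw [Finset.mul_sum, Finset.sum_mul]
    apply Finset.sum_congr rfl
    intro j _
    rw [mul_pow, mul_pow, pow_add, pow_add]
    ring
  rw [setIntegral_congr_fun measurableSet_Ioi hfun, integral_finset_sum _ (fun j _ => hint j)]
  have hterm : ∀ j ∈ Finset.range (m + 1),
      (∫ r in Ioi (0:ℝ), ((Real.sqrt 2) ^ k * ((-1 : ℝ) ^ j * (Nat.choose (m + k) (m - j) : ℝ)
          * 2 ^ j / (Nat.factorial j : ℝ))) * (r ^ (k + 2 * j + 1) * Real.exp (-r ^ 2)))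
        = (Real.sqrt 2) ^ k * Real.Gamma ((k : ℝ) / 2 + 1) / 2
            * ((-1 : ℝ) ^ j * (Nat.choose (m + k) (m - j) : ℝ) * Bb k j) := by
    intro j _
    rw [integral_const_mul, integral_pow_nat_exp_neg_sq]
    have he : (((k + 2 * j + 1 : ℕ) : ℝ) + 1) / 2 = (k : ℝ) / 2 + j + 1 := by
      push_cast; ring
    rw [he, Gamma_half_add_nat k j]
    unfold Bb Pq
    have hj : (Nat.factorial j : ℝ) ≠ 0 := by positivity
    field_simp
  rw [Finset.sum_congr rfl hterm, ← Finset.mul_sum]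
  rfl

lemma wang_closed (m n : ℕ) (h : m ≤ n) :
    wang m n = (2 * π)⁻¹ * Real.sqrt ((Nat.factorial m : ℝ) / (Nat.factorial n : ℝ))
      * (Real.sqrt 2) ^ (n - m)
      * (Real.Gamma (((n - m : ℕ) : ℝ) / 2 + (m / 2 : ℕ) + 1) / (Nat.factorial (m / 2) : ℝ)) := by
  unfold wang
  rw [laguerre_integral m (n - m), Sc_eq]
  have hG : Real.Gamma (((n - m : ℕ) : ℝ) / 2 + (m / 2 : ℕ) + 1)
      = Real.Gamma (((n - m : ℕ) : ℝ) / 2 + 1) * Pq (n - m) (m / 2) * (Nat.factorial (m / 2) : ℝ) := by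
    rw [Gamma_half_add_nat (n - m) (m / 2)]
    unfold Pq
    have : (Nat.factorial (m / 2) : ℝ) ≠ 0 := by positivity
    field_simp
  rw [hG]
  have hfq : (Nat.factorial (m / 2) : ℝ) ≠ 0 := by positivity
  have hm1 : ((-1 : ℝ) ^ m) * ((-1 : ℝ) ^ m) = 1 := by
    rw [← pow_add]
    exact Even.neg_one_pow ⟨m, rfl⟩
  have hpi : (π : ℝ) ≠ 0 := Real.pi_ne_zero
  set S := Real.sqrt ((Nat.factorial m : ℝ) / (Nat.factorial n : ℝ)) with hS
  set K := (Real.sqrt 2) ^ (n - m) with hK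
  set G2 := Real.Gamma (((n - m : ℕ) : ℝ) / 2 + 1) with hG2
  set P := Pq (n - m) (m / 2) with hP
  set F := (Nat.factorial (m / 2) : ℝ) with hF
  have hFF : G2 * P * F / F = G2 * P := by field_simp
  rw [hFF]
  field_simp
  linear_combination (S * K * G2 * P) * hm1


lemma sqrt4 : Real.sqrt (4:ℝ) = 2 := by
  rw [show (4:ℝ) = 2^2 by norm_num, Real.sqrt_sq (by norm_num : (0:ℝ) ≤ 2)]

lemma central_id (q : ℕ) (hq : 1 ≤ q) :
    ((Nat.factorial (2*q) : ℝ)) / ((Nat.factorial q : ℝ)^2 * 4^q) * Real.sqrt (π * q)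
      = Real.sqrt π * Stirling.stirlingSeq (2*q) / (Stirling.stirlingSeq q)^2 := by
  have hq0 : (0:ℝ) < q := by exact_mod_cast hq
  rw [Stirling.stirlingSeq, Stirling.stirlingSeq]
  push_cast
  rw [show (2:ℝ)*(2*(q:ℝ)) = 4*(q:ℝ) by ring]
  rw [Real.sqrt_mul (by norm_num : (0:ℝ) ≤ 4), sqrt4,
      Real.sqrt_mul Real.pi_pos.le, Real.sqrt_mul (by norm_num : (0:ℝ) ≤ 2)]
  rw [show (2*(q:ℝ)/Real.exp 1) = 2*((q:ℝ)/Real.exp 1) by ring]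
  rw [mul_pow (2:ℝ) ((q:ℝ)/Real.exp 1) (2*q),
      show (2:ℝ)^(2*q) = 4^q by rw [pow_mul]; norm_num,
      pow_mul' ((q:ℝ)/Real.exp 1) 2 q]
  have hX : (0:ℝ) < ((q:ℝ)/Real.exp 1)^q := by positivity
  have hfq : (0:ℝ) < (Nat.factorial q : ℝ) := by positivity
  have hsq : (0:ℝ) < Real.sqrt q := Real.sqrt_pos.mpr hq0
  have hs2 : (0:ℝ) < Real.sqrt 2 := by norm_num [Real.sqrt_pos]
  have hsqsq : Real.sqrt (q:ℝ) * Real.sqrt (q:ℝ) = q := Real.mul_self_sqrt hq0.le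
  have hs2s2 : Real.sqrt (2:ℝ) * Real.sqrt (2:ℝ) = 2 := Real.mul_self_sqrt (by norm_num)
  field_simp
  ring_nf
  rw [Real.sq_sqrt (by norm_num : (0:ℝ) ≤ 2)]


lemma tendsto_central :
    Tendsto (fun q : ℕ => ((Nat.factorial (2*q) : ℝ)) / ((Nat.factorial q : ℝ)^2 * 4^q)
      * Real.sqrt (π * q)) atTop (𝓝 1) := by
  have h2q : Tendsto (fun q : ℕ => 2*q) atTop atTop :=
    tendsto_atTop_mono (fun q => by simp only [id_eq]; omega) tendsto_id
  have hs2 : Tendsto (fun q : ℕ => Stirling.stirlingSeq (2*q)) atTop (𝓝 (Real.sqrt π)) :=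
    Stirling.tendsto_stirlingSeq_sqrt_pi.comp h2q
  have hs : Tendsto (fun q : ℕ => (Stirling.stirlingSeq q)^2) atTop (𝓝 ((Real.sqrt π)^2)) :=
    Stirling.tendsto_stirlingSeq_sqrt_pi.pow 2
  have hne : ((Real.sqrt π)^2) ≠ 0 := by
    rw [Real.sq_sqrt Real.pi_pos.le]; exact Real.pi_ne_zero
  have hlim : Tendsto (fun q : ℕ => Real.sqrt π * Stirling.stirlingSeq (2*q)
      / (Stirling.stirlingSeq q)^2) atTop (𝓝 (Real.sqrt π * Real.sqrt π / (Real.sqrt π)^2)) :=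
    (tendsto_const_nhds.mul hs2).div hs hne
  have heq : Real.sqrt π * Real.sqrt π / (Real.sqrt π)^2 = 1 := by
    rw [← Real.sqrt_mul_self Real.pi_pos.le] at hne ⊢
    field_simp
  rw [heq] at hlim
  apply hlim.congr'
  filter_upwards [eventually_ge_atTop 1] with q hq
  exact (central_id q hq).symm

lemma gamma_midpoint {a b : ℝ} (ha : 0 < a) (hb : 0 < b) :
    Real.Gamma ((a + b)/2)^2 ≤ Real.Gamma a * Real.Gamma b := by
  have cv := Real.convexOn_log_Gamma
  have h := cv.2 (Set.mem_Ioi.mpr ha) (Set.mem_Ioi.mpr hb)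
    (by norm_num : (0:ℝ) ≤ 1/2) (by norm_num : (0:ℝ) ≤ 1/2) (by norm_num)
  simp only [smul_eq_mul, Function.comp_apply] at h
  have harg : (1/2 : ℝ)*a + (1/2 : ℝ)*b = (a+b)/2 := by ring
  rw [harg] at h
  have hpos : 0 < Real.Gamma ((a+b)/2) := Real.Gamma_pos_of_pos (by linarith)
  have hpa : 0 < Real.Gamma a := Real.Gamma_pos_of_pos ha
  have hpb : 0 < Real.Gamma b := Real.Gamma_pos_of_pos hb
  have hlog : Real.log (Real.Gamma ((a+b)/2)^2) ≤ Real.log (Real.Gamma a * Real.Gamma b) := by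
    rw [Real.log_pow, Real.log_mul hpa.ne' hpb.ne']
    push_cast
    linarith
  exact (Real.log_le_log_iff (by positivity) (by positivity)).mp hlog

lemma gamma_ratio_sq_bounds (n : ℕ) (hn : 1 ≤ n) :
    ((n:ℝ)/2) ≤ (Real.Gamma ((n:ℝ)/2 + 1) / Real.Gamma (((n:ℝ)+1)/2))^2 ∧
    (Real.Gamma ((n:ℝ)/2 + 1) / Real.Gamma (((n:ℝ)+1)/2))^2 ≤ ((n:ℝ)+1)/2 := by
  have hn0 : (0:ℝ) < n := by exact_mod_cast hn
  set y : ℝ := ((n:ℝ)+1)/2 with hy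
  have hy0 : 0 < y := by positivity
  have hyh : (0:ℝ) < y + 1/2 := by linarith
  have hymh : y - 1/2 = (n:ℝ)/2 := by rw [hy]; ring
  have hkey : (n:ℝ)/2 + 1 = y + 1/2 := by rw [hy]; ring
  have hGy : 0 < Real.Gamma y := Real.Gamma_pos_of_pos hy0
  have hGyh : 0 < Real.Gamma (y + 1/2) := Real.Gamma_pos_of_pos hyh
  have hGn2 : 0 < Real.Gamma ((n:ℝ)/2) := Real.Gamma_pos_of_pos (by positivity)
  constructor
  · -- lower bound : Γ(y)² ≤ Γ(y-1/2)Γ(y+1/2)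
    have h1 : Real.Gamma y ^ 2 ≤ Real.Gamma (y - 1/2) * Real.Gamma (y + 1/2) := by
      have := gamma_midpoint (a := y - 1/2) (b := y + 1/2)
        (by rw [hymh]; positivity) hyh
      rw [show (y - 1/2 + (y + 1/2))/2 = y by ring] at this
      exact this
    -- Γ(n/2+1) = (n/2) Γ(n/2)
    have h2 : Real.Gamma ((n:ℝ)/2 + 1) = ((n:ℝ)/2) * Real.Gamma ((n:ℝ)/2) := by
      exact Real.Gamma_add_one (by positivity)
    rw [hkey, hymh] at *
    rw [div_pow, le_div_iff₀ (by positivity)]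
    calc ((n:ℝ)/2) * Real.Gamma y ^ 2
        ≤ ((n:ℝ)/2) * (Real.Gamma ((n:ℝ)/2) * Real.Gamma (y + 1/2)) := by
          apply mul_le_mul_of_nonneg_left h1 (by positivity)
      _ = Real.Gamma (y + 1/2) ^ 2 := by rw [pow_two]; rw [h2] at *; nlinarith [h2]
  · -- upper bound : Γ(y+1/2)² ≤ Γ(y)Γ(y+1)
    have h1 : Real.Gamma (y + 1/2) ^ 2 ≤ Real.Gamma y * Real.Gamma (y + 1) := by
      have := gamma_midpoint (a := y) (b := y + 1) hy0 (by linarith)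
      rw [show (y + (y + 1))/2 = y + 1/2 by ring] at this
      exact this
    have h2 : Real.Gamma (y + 1) = y * Real.Gamma y := Real.Gamma_add_one hy0.ne'
    rw [hkey]
    rw [div_pow, div_le_iff₀ (by positivity)]
    calc Real.Gamma (y + 1/2) ^ 2 ≤ Real.Gamma y * (y * Real.Gamma y) := by
          rw [← h2]; exact h1
      _ = y * Real.Gamma y ^ 2 := by ring

lemma tendsto_gamma_ratio :
    Tendsto (fun n : ℕ => Real.Gamma ((n:ℝ)/2 + 1) / Real.Gamma (((n:ℝ)+1)/2)
      / Real.sqrt ((n:ℝ)/2)) atTop (𝓝 1) := by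
  set R : ℕ → ℝ := fun n => Real.Gamma ((n:ℝ)/2 + 1) / Real.Gamma (((n:ℝ)+1)/2) with hR
  have hRpos : ∀ n : ℕ, 0 < R n := fun n => by
    apply div_pos (Real.Gamma_pos_of_pos (by positivity)) (Real.Gamma_pos_of_pos (by positivity))
  have hQ : Tendsto (fun n : ℕ => (R n)^2 / ((n:ℝ)/2)) atTop (𝓝 1) := by
    have hub : Tendsto (fun n : ℕ => ((n:ℝ)+1)/(n:ℝ)) atTop (𝓝 1) := by
      have h0 : Tendsto (fun n : ℕ => 1 + 1/(n:ℝ)) atTop (𝓝 (1 + 0)) :=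
        tendsto_const_nhds.add tendsto_one_div_atTop_nhds_zero_nat
      rw [add_zero] at h0
      apply h0.congr'
      filter_upwards [eventually_ge_atTop 1] with n hn
      have : ((n:ℝ)) ≠ 0 := by positivity
      field_simp
    apply tendsto_of_tendsto_of_tendsto_of_le_of_le' tendsto_const_nhds hub
    · filter_upwards [eventually_ge_atTop 1] with n hn
      have h := (gamma_ratio_sq_bounds n hn).1
      have hn0 : (0:ℝ) < (n:ℝ)/2 := by positivity
      rw [le_div_iff₀ hn0, one_mul]
      exact h
    · filter_upwards [eventually_ge_atTop 1] with n hn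
      have h := (gamma_ratio_sq_bounds n hn).2
      have hn0 : (0:ℝ) < (n:ℝ)/2 := by positivity
      rw [div_le_div_iff₀ hn0 (by positivity : (0:ℝ) < (n:ℝ))]
      have hn0' : (0:ℝ) < (n:ℝ) := by positivity
      nlinarith [h]
  have hsq : Tendsto (fun n : ℕ => Real.sqrt ((R n)^2 / ((n:ℝ)/2))) atTop (𝓝 1) := by
    have := (Real.continuous_sqrt.tendsto 1).comp hQ
    rwa [Real.sqrt_one] at this
  apply hsq.congr'
  filter_upwards [eventually_ge_atTop 1] with n hn
  have hn0 : (0:ℝ) < (n:ℝ)/2 := by positivity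
  rw [Real.sqrt_div (sq_nonneg _), Real.sqrt_sq (hRpos n).le]


lemma pow_two_cancel (n q : ℕ) (h : 2*q ≤ n) : (4:ℝ)^q * 2^(n - 2*q) = 2^n := by
  rw [show (4:ℝ) = 2^2 by norm_num, ← pow_mul, ← pow_add]
  congr 1
  omega

lemma dup_formula (n : ℕ) :
    Real.Gamma (((n:ℝ)+1)/2) * Real.Gamma ((n:ℝ)/2 + 1)
      = Real.sqrt π * (Nat.factorial n : ℝ) / 2^n := by
  have h := Real.Gamma_mul_Gamma_add_half (((n:ℝ)+1)/2)
  rw [show ((n:ℝ)+1)/2 + 1/2 = (n:ℝ)/2 + 1 by ring,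
      show (1:ℝ) - 2*(((n:ℝ)+1)/2) = -(n:ℝ) by ring,
      show 2*(((n:ℝ)+1)/2) = (n:ℝ)+1 by ring,
      Real.Gamma_nat_eq_factorial,
      Real.rpow_neg (by norm_num : (0:ℝ) ≤ 2), Real.rpow_natCast] at h
  rw [h]
  field_simp

lemma even_sq (q n : ℕ) (hq : 1 ≤ q) (hn : 2*q ≤ n) :
    (Real.sqrt ((Nat.factorial (2*q) : ℝ) / (Nat.factorial n : ℝ)) * (Real.sqrt 2)^(n - 2*q)
      * (Real.Gamma ((n:ℝ)/2 + 1) / (Nat.factorial q : ℝ)))^2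
    = (((Nat.factorial (2*q) : ℝ)) / ((Nat.factorial q : ℝ)^2 * 4^q) * Real.sqrt (π * (q:ℝ)))
      * (Real.Gamma ((n:ℝ)/2+1) / Real.Gamma (((n:ℝ)+1)/2) / Real.sqrt ((n:ℝ)/2))
      * Real.sqrt ((n:ℝ)/(2*(q:ℝ))) := by
  have hn1 : 1 ≤ n := le_trans (by omega) hn
  have hq0 : (0:ℝ) < q := by exact_mod_cast hq
  have hn0 : (0:ℝ) < n := by exact_mod_cast hn1
  have hFq : (0:ℝ) < (Nat.factorial q : ℝ) := by positivity
  have hFn : (0:ℝ) < (Nat.factorial n : ℝ) := by positivity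
  have hF2q : (0:ℝ) < (Nat.factorial (2*q) : ℝ) := by positivity
  have ha : (0:ℝ) < Real.Gamma ((n:ℝ)/2 + 1) := Real.Gamma_pos_of_pos (by positivity)
  have hb : (0:ℝ) < Real.Gamma (((n:ℝ)+1)/2) := Real.Gamma_pos_of_pos (by positivity)
  have hs2 : (0:ℝ) < Real.sqrt ((n:ℝ)/2) := Real.sqrt_pos.mpr (by positivity)
  -- LHS squared
  have hL : (Real.sqrt ((Nat.factorial (2*q) : ℝ) / (Nat.factorial n : ℝ)) * (Real.sqrt 2)^(n - 2*q)
      * (Real.Gamma ((n:ℝ)/2 + 1) / (Nat.factorial q : ℝ)))^2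
      = ((Nat.factorial (2*q) : ℝ) / (Nat.factorial n : ℝ)) * 2^(n - 2*q)
        * (Real.Gamma ((n:ℝ)/2 + 1)^2 / (Nat.factorial q : ℝ)^2) := by
    rw [mul_pow, mul_pow, div_pow, ← pow_mul, mul_comm (n - 2*q) 2, pow_mul,
      Real.sq_sqrt (by positivity : (0:ℝ) ≤ (Nat.factorial (2*q) : ℝ) / (Nat.factorial n : ℝ)),
      Real.sq_sqrt (by norm_num : (0:ℝ) ≤ (2:ℝ))]
  rw [hL]
  -- sqrt cluster
  have hcluster : Real.sqrt (π * (q:ℝ)) * Real.sqrt ((n:ℝ)/(2*(q:ℝ)))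
      = Real.sqrt π * Real.sqrt ((n:ℝ)/2) := by
    rw [← Real.sqrt_mul (by positivity), ← Real.sqrt_mul Real.pi_pos.le]
    congr 1
    field_simp
  have h2n := pow_two_cancel n q hn
  have hdup2 : Real.Gamma (((n:ℝ)+1)/2) * Real.Gamma ((n:ℝ)/2 + 1) * 2^n
      = Real.sqrt π * (Nat.factorial n : ℝ) := by
    rw [dup_formula n]
    field_simp
  set a := Real.Gamma ((n:ℝ)/2 + 1) with ha'
  set b := Real.Gamma (((n:ℝ)+1)/2) with hb'
  set sp := Real.sqrt π with hsp'
  set s1 := Real.sqrt (π * (q:ℝ)) with hs1'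
  set s2 := Real.sqrt ((n:ℝ)/2) with hs2'
  set s3 := Real.sqrt ((n:ℝ)/(2*(q:ℝ))) with hs3'
  set Fq := (Nat.factorial q : ℝ) with hFq'
  set Fn := (Nat.factorial n : ℝ) with hFn'
  set F2q := (Nat.factorial (2*q) : ℝ) with hF2q'
  have key : (2:ℝ)^(n-2*q) * a^2 * (4^q * b * s2) = Fn * (s1 * a * s3) := by
    linear_combination (a^2*b*s2)*h2n + (a*s2)*hdup2 - (Fn*a)*hcluster
  field_simp
  apply mul_left_cancel₀ ha.ne'
  linear_combination key


lemma odd_sq (q n : ℕ) (hq : 1 ≤ q) (hn : 2*q+1 ≤ n) :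
    (Real.sqrt ((Nat.factorial (2*q+1) : ℝ) / (Nat.factorial n : ℝ)) * (Real.sqrt 2)^(n - (2*q+1))
      * (Real.Gamma (((n:ℝ)+1)/2) / (Nat.factorial q : ℝ)))^2
    = (((Nat.factorial (2*q) : ℝ)) / ((Nat.factorial q : ℝ)^2 * 4^q) * Real.sqrt (π * (q:ℝ)))
      * (Real.Gamma (((n:ℝ)+1)/2) * Real.sqrt ((n:ℝ)/2) / Real.Gamma ((n:ℝ)/2+1))
      * Real.sqrt (((2*(q:ℝ)+1)/(n:ℝ)) * ((2*(q:ℝ)+1)/(2*(q:ℝ)))) := by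
  have hn1 : 1 ≤ n := le_trans (by omega) hn
  have hq0 : (0:ℝ) < q := by exact_mod_cast hq
  have hn0 : (0:ℝ) < n := by exact_mod_cast hn1
  have hFq : (0:ℝ) < (Nat.factorial q : ℝ) := by positivity
  have hFn : (0:ℝ) < (Nat.factorial n : ℝ) := by positivity
  have hF2q : (0:ℝ) < (Nat.factorial (2*q) : ℝ) := by positivity
  have ha : (0:ℝ) < Real.Gamma ((n:ℝ)/2 + 1) := Real.Gamma_pos_of_pos (by positivity)
  have hb : (0:ℝ) < Real.Gamma (((n:ℝ)+1)/2) := Real.Gamma_pos_of_pos (by positivity)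
  have hs2 : (0:ℝ) < Real.sqrt ((n:ℝ)/2) := Real.sqrt_pos.mpr (by positivity)
  have hL : (Real.sqrt ((Nat.factorial (2*q+1) : ℝ) / (Nat.factorial n : ℝ)) * (Real.sqrt 2)^(n - (2*q+1))
      * (Real.Gamma (((n:ℝ)+1)/2) / (Nat.factorial q : ℝ)))^2
      = ((Nat.factorial (2*q+1) : ℝ) / (Nat.factorial n : ℝ)) * 2^(n - (2*q+1))
        * (Real.Gamma (((n:ℝ)+1)/2)^2 / (Nat.factorial q : ℝ)^2) := by
    rw [mul_pow, mul_pow, div_pow, ← pow_mul, mul_comm (n - (2*q+1)) 2, pow_mul,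
      Real.sq_sqrt (by positivity : (0:ℝ) ≤ (Nat.factorial (2*q+1) : ℝ) / (Nat.factorial n : ℝ)),
      Real.sq_sqrt (by norm_num : (0:ℝ) ≤ (2:ℝ))]
  rw [hL]
  have hcluster : Real.sqrt (π * (q:ℝ)) * Real.sqrt ((n:ℝ)/2)
      * Real.sqrt (((2*(q:ℝ)+1)/(n:ℝ)) * ((2*(q:ℝ)+1)/(2*(q:ℝ))))
      = (2*(q:ℝ)+1)/2 * Real.sqrt π := by
    rw [← Real.sqrt_mul (by positivity), ← Real.sqrt_mul (by positivity)]
    rw [show π * (q:ℝ) * ((n:ℝ)/2) * (((2*(q:ℝ)+1)/(n:ℝ)) * ((2*(q:ℝ)+1)/(2*(q:ℝ))))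
        = π * ((2*(q:ℝ)+1)/2)^2 by field_simp]
    rw [Real.sqrt_mul Real.pi_pos.le, Real.sqrt_sq (by positivity)]
    ring
  have h2n' : (4:ℝ)^q * 2^(n-(2*q+1)) * 2 = 2^n := by
    rw [show (4:ℝ) = 2^2 by norm_num, ← pow_mul, ← pow_add,
      show ((2:ℝ)^(2*q + (n - (2*q+1))) * 2 = 2^(2*q + (n - (2*q+1)) + 1)) by rw [pow_succ]]
    congr 1
    omega
  have hdup2 : Real.Gamma (((n:ℝ)+1)/2) * Real.Gamma ((n:ℝ)/2 + 1) * 2^n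
      = Real.sqrt π * (Nat.factorial n : ℝ) := by
    rw [dup_formula n]
    field_simp
  have hm : ((Nat.factorial (2*q+1) : ℝ)) = (2*(q:ℝ)+1) * (Nat.factorial (2*q) : ℝ) := by
    rw [Nat.factorial_succ]
    push_cast
    ring
  set a := Real.Gamma ((n:ℝ)/2 + 1) with ha'
  set b := Real.Gamma (((n:ℝ)+1)/2) with hb'
  set sp := Real.sqrt π with hsp'
  set s1 := Real.sqrt (π * (q:ℝ)) with hs1'
  set s2 := Real.sqrt ((n:ℝ)/2) with hs2'
  set s3 := Real.sqrt (((2*(q:ℝ)+1)/(n:ℝ)) * ((2*(q:ℝ)+1)/(2*(q:ℝ)))) with hs3'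
  set Fq := (Nat.factorial q : ℝ) with hFq'
  set Fn := (Nat.factorial n : ℝ) with hFn'
  set F2q := (Nat.factorial (2*q) : ℝ) with hF2q'
  set Fm := (Nat.factorial (2*q+1) : ℝ) with hFm'
  have key : Fm * 2^(n-(2*q+1)) * b^2 * (4^q * a) = F2q * s1 * s2 * s3 * b * Fn := by
    linear_combination (2^(n-(2*q+1)) * b^2 * 4^q * a) * hm
      + ((2*(q:ℝ)+1) * F2q * b / 2) * hdup2
      + ((2*(q:ℝ)+1) * F2q * b^2 * a / 2) * h2n'
      - (F2q * b * Fn) * hcluster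
  field_simp
  apply mul_left_cancel₀ hb.ne'
  linear_combination key


lemma even_arg (m n : ℕ) (h : m ≤ n) (he : m % 2 = 0) :
    ((n - m : ℕ) : ℝ)/2 + ((m/2 : ℕ) : ℝ) + 1 = (n:ℝ)/2 + 1 := by
  have h1 : ((n - m : ℕ):ℝ) = (n:ℝ) - m := by rw [Nat.cast_sub h]
  have h2 : ((m/2 : ℕ):ℝ) = (m:ℝ)/2 := by
    obtain ⟨t, rfl⟩ : ∃ t, m = 2*t := ⟨m/2, by omega⟩
    rw [Nat.mul_div_cancel_left _ (by norm_num)]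
    push_cast; ring
  rw [h1, h2]; ring

lemma odd_arg (m n : ℕ) (h : m ≤ n) (he : m % 2 = 1) :
    ((n - m : ℕ) : ℝ)/2 + ((m/2 : ℕ) : ℝ) + 1 = ((n:ℝ)+1)/2 := by
  have h1 : ((n - m : ℕ):ℝ) = (n:ℝ) - m := by rw [Nat.cast_sub h]
  have h2 : ((m/2 : ℕ):ℝ) = ((m:ℝ)-1)/2 := by
    obtain ⟨t, rfl⟩ : ∃ t, m = 2*t+1 := ⟨m/2, by omega⟩
    rw [show (2*t+1)/2 = t by omega]
    push_cast; ring
  rw [h1, h2]; ring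

lemma tendsto_odd_ratio : Tendsto (fun q : ℕ => (2*(q:ℝ)+1)/(2*(q:ℝ))) atTop (𝓝 1) := by
  have h0 : Tendsto (fun q : ℕ => 1 + (1/(2:ℝ)) * (1/(q:ℝ))) atTop (𝓝 (1 + (1/2) * 0)) :=
    tendsto_const_nhds.add (tendsto_const_nhds.mul tendsto_one_div_atTop_nhds_zero_nat)
  norm_num at h0
  apply h0.congr'
  filter_upwards [eventually_ge_atTop 1] with q hq
  have hq0 : ((q:ℝ)) ≠ 0 := by positivity
  field_simp

lemma sqrt_sqrt_inv (c : ℝ) (hc : 0 < c) :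
    Real.sqrt (Real.sqrt c⁻¹) = c ^ (-(1:ℝ)/4) := by
  rw [show c⁻¹ = c ^ (-1 : ℝ) by rw [Real.rpow_neg_one],
    Real.sqrt_eq_rpow, Real.sqrt_eq_rpow, ← Real.rpow_mul hc.le, ← Real.rpow_mul hc.le]
  norm_num

lemma sqrt_sqrt_self (c : ℝ) (hc : 0 < c) :
    Real.sqrt (Real.sqrt c) = c ^ ((1:ℝ)/4) := by
  rw [Real.sqrt_eq_rpow, Real.sqrt_eq_rpow, ← Real.rpow_mul hc.le]
  norm_num

theorem wang_tendsto_ratio (c : ℝ) (hc : c ∈ Set.Ioo (0 : ℝ) 1)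
    (m n : ℕ → ℕ) (hmn : ∀ j, m j ≤ n j)
    (hm : Filter.Tendsto m Filter.atTop Filter.atTop)
    (hn : Filter.Tendsto n Filter.atTop Filter.atTop)
    (hratio : Filter.Tendsto (fun j => (m j : ℝ) / (n j : ℝ)) Filter.atTop (nhds c)) :
    ((∀ j, Even (m j)) →
      Filter.Tendsto (fun j => wang (m j) (n j)) Filter.atTop
        (nhds ((2 * π)⁻¹ * c ^ (-(1 : ℝ) / 4)))) ∧
    ((∀ j, Odd (m j)) →
      Filter.Tendsto (fun j => wang (m j) (n j)) Filter.atTop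
        (nhds ((2 * π)⁻¹ * c ^ ((1 : ℝ) / 4)))) := by
  obtain ⟨hc0, hc1⟩ := hc
  have hq : Tendsto (fun j => m j / 2) atTop atTop := by
    apply tendsto_atTop.mpr
    intro b
    filter_upwards [hm.eventually_ge_atTop (2*b)] with j hj
    omega
  have hU : Tendsto (fun j => ((Nat.factorial (2*(m j / 2)) : ℝ))
      / ((Nat.factorial (m j / 2) : ℝ)^2 * 4^(m j / 2))
      * Real.sqrt (π * ((m j / 2 : ℕ) : ℝ))) atTop (𝓝 1) := tendsto_central.comp hq
  have hV : Tendsto (fun j => Real.Gamma ((n j:ℝ)/2+1)/Real.Gamma (((n j:ℝ)+1)/2)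
      / Real.sqrt ((n j:ℝ)/2)) atTop (𝓝 1) := tendsto_gamma_ratio.comp hn
  have hinv : Tendsto (fun j => (n j : ℝ)/(m j : ℝ)) atTop (𝓝 c⁻¹) := by
    have h := hratio.inv₀ (ne_of_gt hc0)
    apply h.congr
    intro j
    rw [inv_div]
  constructor
  · -- even case
    intro heven
    have hmq : ∀ j, m j = 2 * (m j / 2) := fun j => by
      obtain ⟨t, ht⟩ := heven j; omega
    have hW : Tendsto (fun j => Real.sqrt ((n j:ℝ)/(2*((m j / 2 : ℕ):ℝ)))) atTop
        (𝓝 (Real.sqrt c⁻¹)) := by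
      apply (Real.continuous_sqrt.tendsto _).comp
      apply hinv.congr
      intro j
      congr 1
      exact_mod_cast hmq j
    have hP : Tendsto (fun j =>
        (((Nat.factorial (2*(m j / 2)) : ℝ))
          / ((Nat.factorial (m j / 2) : ℝ)^2 * 4^(m j / 2))
          * Real.sqrt (π * ((m j / 2 : ℕ) : ℝ)))
        * (Real.Gamma ((n j:ℝ)/2+1)/Real.Gamma (((n j:ℝ)+1)/2) / Real.sqrt ((n j:ℝ)/2))
        * Real.sqrt ((n j:ℝ)/(2*((m j / 2 : ℕ):ℝ)))) atTop
        (𝓝 (1 * 1 * Real.sqrt c⁻¹)) := (hU.mul hV).mul hW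
    rw [show (1:ℝ) * 1 * Real.sqrt c⁻¹ = Real.sqrt c⁻¹ by ring] at hP
    set S : ℕ → ℝ := fun j => Real.sqrt ((Nat.factorial (m j):ℝ)/(Nat.factorial (n j):ℝ))
      * (Real.sqrt 2)^(n j - m j)
      * (Real.Gamma ((n j:ℝ)/2+1)/(Nat.factorial (m j / 2):ℝ)) with hSdef
    have hS0 : ∀ j, 0 ≤ S j := by
      intro j
      have h1 : 0 < Real.Gamma ((n j:ℝ)/2+1) := Real.Gamma_pos_of_pos (by positivity)
      rw [hSdef]
      positivity
    have hS : Tendsto S atTop (𝓝 (Real.sqrt (Real.sqrt c⁻¹))) := by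
      have h1 := (Real.continuous_sqrt.tendsto _).comp hP
      apply h1.congr'
      filter_upwards [hm.eventually_ge_atTop 2] with j hj
      have hq1 : 1 ≤ m j / 2 := by omega
      have hle : 2 * (m j / 2) ≤ n j := by
        have := hmn j; omega
      have hkey := even_sq (m j / 2) (n j) hq1 hle
      have hSj : S j ^ 2 = (((Nat.factorial (2*(m j / 2)) : ℝ))
          / ((Nat.factorial (m j / 2) : ℝ)^2 * 4^(m j / 2))
          * Real.sqrt (π * ((m j / 2 : ℕ) : ℝ)))
          * (Real.Gamma ((n j:ℝ)/2+1)/Real.Gamma (((n j:ℝ)+1)/2) / Real.sqrt ((n j:ℝ)/2))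
          * Real.sqrt ((n j:ℝ)/(2*((m j / 2 : ℕ):ℝ))) := by
        simp only [hSdef]
        rw [show m j = 2 * (m j / 2) from hmq j]
        rw [show 2 * (m j / 2) / 2 = m j / 2 from by omega]
        exact hkey
      rw [Function.comp_apply, ← hSj, Real.sqrt_sq (hS0 j)]
    have hwang : ∀ j, wang (m j) (n j) = (2*π)⁻¹ * S j := by
      intro j
      have hmod : m j % 2 = 0 := by
        have := hmq j; omega
      rw [wang_closed (m j) (n j) (hmn j), even_arg (m j) (n j) (hmn j) hmod]
      simp only [hSdef]
      ring
    have hfin := hS.const_mul ((2*π)⁻¹)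
    rw [show (2*π)⁻¹ * c ^ (-(1:ℝ)/4) = (2*π)⁻¹ * Real.sqrt (Real.sqrt c⁻¹) from by
      rw [sqrt_sqrt_inv c hc0]]
    exact hfin.congr (fun j => by rw [← hwang j])
  · -- odd case
    intro hodd
    have hmq : ∀ j, m j = 2 * (m j / 2) + 1 := fun j => by
      obtain ⟨t, ht⟩ := hodd j; omega
    have hV' : Tendsto (fun j => Real.Gamma (((n j:ℝ)+1)/2) * Real.sqrt ((n j:ℝ)/2)
        / Real.Gamma ((n j:ℝ)/2+1)) atTop (𝓝 1) := by
      have h := hV.inv₀ one_ne_zero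
      rw [inv_one] at h
      apply h.congr
      intro j
      rw [div_div, inv_div]
    have hW : Tendsto (fun j => Real.sqrt
        (((2*((m j / 2 : ℕ):ℝ)+1)/(n j:ℝ)) * ((2*((m j / 2 : ℕ):ℝ)+1)/(2*((m j / 2 : ℕ):ℝ)))))
        atTop (𝓝 (Real.sqrt (c * 1))) := by
      apply (Real.continuous_sqrt.tendsto _).comp
      apply Tendsto.mul
      · apply hratio.congr
        intro j
        congr 1
        exact_mod_cast hmq j
      · exact tendsto_odd_ratio.comp hq
    rw [show c * 1 = c by ring] at hW
    have hP : Tendsto (fun j =>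
        (((Nat.factorial (2*(m j / 2)) : ℝ))
          / ((Nat.factorial (m j / 2) : ℝ)^2 * 4^(m j / 2))
          * Real.sqrt (π * ((m j / 2 : ℕ) : ℝ)))
        * (Real.Gamma (((n j:ℝ)+1)/2) * Real.sqrt ((n j:ℝ)/2) / Real.Gamma ((n j:ℝ)/2+1))
        * Real.sqrt (((2*((m j / 2 : ℕ):ℝ)+1)/(n j:ℝ))
            * ((2*((m j / 2 : ℕ):ℝ)+1)/(2*((m j / 2 : ℕ):ℝ))))) atTop
        (𝓝 (1 * 1 * Real.sqrt c)) := (hU.mul hV').mul hW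
    rw [show (1:ℝ) * 1 * Real.sqrt c = Real.sqrt c by ring] at hP
    set S : ℕ → ℝ := fun j => Real.sqrt ((Nat.factorial (m j):ℝ)/(Nat.factorial (n j):ℝ))
      * (Real.sqrt 2)^(n j - m j)
      * (Real.Gamma (((n j:ℝ)+1)/2)/(Nat.factorial (m j / 2):ℝ)) with hSdef
    have hS0 : ∀ j, 0 ≤ S j := by
      intro j
      have h1 : 0 < Real.Gamma (((n j:ℝ)+1)/2) := Real.Gamma_pos_of_pos (by positivity)
      rw [hSdef]
      positivity
    have hS : Tendsto S atTop (𝓝 (Real.sqrt (Real.sqrt c))) := by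
      have h1 := (Real.continuous_sqrt.tendsto _).comp hP
      apply h1.congr'
      filter_upwards [hm.eventually_ge_atTop 2] with j hj
      have hq1 : 1 ≤ m j / 2 := by
        have := hmq j; omega
      have hle : 2 * (m j / 2) + 1 ≤ n j := by
        have h1 := hmn j; have h2 := hmq j; omega
      have hkey := odd_sq (m j / 2) (n j) hq1 hle
      have hSj : S j ^ 2 = (((Nat.factorial (2*(m j / 2)) : ℝ))
          / ((Nat.factorial (m j / 2) : ℝ)^2 * 4^(m j / 2))
          * Real.sqrt (π * ((m j / 2 : ℕ) : ℝ)))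
          * (Real.Gamma (((n j:ℝ)+1)/2) * Real.sqrt ((n j:ℝ)/2) / Real.Gamma ((n j:ℝ)/2+1))
          * Real.sqrt (((2*((m j / 2 : ℕ):ℝ)+1)/(n j:ℝ))
              * ((2*((m j / 2 : ℕ):ℝ)+1)/(2*((m j / 2 : ℕ):ℝ)))) := by
        simp only [hSdef]
        rw [show m j = 2 * (m j / 2) + 1 from hmq j]
        rw [show (2 * (m j / 2) + 1) / 2 = m j / 2 from by omega]
        exact hkey
      rw [Function.comp_apply, ← hSj, Real.sqrt_sq (hS0 j)]
    have hwang : ∀ j, wang (m j) (n j) = (2*π)⁻¹ * S j := by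
      intro j
      have hmod : m j % 2 = 1 := by
        have := hmq j; omega
      rw [wang_closed (m j) (n j) (hmn j), odd_arg (m j) (n j) (hmn j) hmod]
      simp only [hSdef]
      ring
    have hfin := hS.const_mul ((2*π)⁻¹)
    rw [show (2*π)⁻¹ * c ^ ((1:ℝ)/4) = (2*π)⁻¹ * Real.sqrt (Real.sqrt c) from by
      rw [sqrt_sqrt_self c hc0]]
    exact hfin.congr (fun j => by rw [← hwang j])

end
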